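/- Let s : ℕ → ℂ satisfy s(0) = 1, χ(m,s) = 0 for every integer m ≥ 3, and χ(2,s) ≠ 0 (i.e., {s} is of type T[ω]). Then χ(λ, s) = 0 for every tuple λ of positive integers with |λ| < 2·len(λ) − 2. -/
import Mathlib


open Finset

/-- `P` is a set partition of the finite set `s`. -/
def IsPartitionOf {α : Type*} [DecidableEq α] (s : Finset α) (P : Finset (Finset α)) : Prop :=
  ∅ ∉ P ∧ (∀ B ∈ P, B ⊆ s) ∧ ∀ a ∈ s, ∃! B, B ∈ P ∧ a ∈ B

open Classical in
noncomputable def partitionsOf {α : Type*} [DecidableEq α] (s : Finset α) :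
    Finset (Finset (Finset α)) :=
  s.powerset.powerset.filter (IsPartitionOf s)

/-- `χ(λ, s)` for a tuple `λ` of integers indexed by a finite set `I`. -/
noncomputable def chiFam {ι : Type*} [DecidableEq ι] (I : Finset ι) (lam : ι → ℕ)
    (s : ℕ → ℂ) : ℂ :=
  ∑ P ∈ partitionsOf I,
    (-1 : ℂ) ^ (P.card - 1) * ((P.card - 1).factorial : ℂ) * ∏ B ∈ P, s (∑ i ∈ B, lam i)

/-- `χ(d, s)`: the value of `χ` at the all-ones tuple of length `d`. -/
noncomputable def chiOnes (s : ℕ → ℂ) (d : ℕ) : ℂ :=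
  chiFam (Finset.univ : Finset (Fin d)) (fun _ => 1) s

variable {ι : Type*} [DecidableEq ι]

lemma mem_partitionsOf {I : Finset ι} {P : Finset (Finset ι)} :
    P ∈ partitionsOf I ↔ IsPartitionOf I P := by
  classical
  unfold partitionsOf
  rw [Finset.mem_filter]
  constructor
  · exact fun h => h.2
  · intro h
    refine ⟨?_, h⟩
    rw [Finset.mem_powerset]
    intro B hB
    rw [Finset.mem_powerset]
    exact h.2.1 B hB

lemma partitionsOf_empty : partitionsOf (∅ : Finset ι) = {∅} := by
  ext P
  rw [mem_partitionsOf, Finset.mem_singleton]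
  constructor
  · rintro ⟨h0, hsub, -⟩
    refine Finset.eq_empty_of_forall_notMem fun B hB => ?_
    have := hsub B hB
    have : B = ∅ := Finset.subset_empty.mp this
    exact h0 (this ▸ hB)
  · rintro rfl
    exact ⟨by simp, by simp, by simp⟩

lemma partitionsOf_singleton (i : ι) : partitionsOf ({i} : Finset ι) = {{{i}}} := by
  ext P
  rw [mem_partitionsOf, Finset.mem_singleton]
  constructor
  · rintro ⟨h0, hsub, hex⟩
    obtain ⟨B, ⟨hBP, hiB⟩, -⟩ := hex i (Finset.mem_singleton_self i)
    have hB : B = {i} := Finset.Subset.antisymm (hsub B hBP) (Finset.singleton_subset_iff.mpr hiB)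
    ext C
    simp only [Finset.mem_singleton]
    constructor
    · intro hC
      have hCs := hsub C hC
      rcases Finset.eq_empty_or_nonempty C with rfl | ⟨x, hx⟩
      · exact absurd hC h0
      · have : x = i := Finset.mem_singleton.mp (hCs hx)
        subst this
        exact Finset.Subset.antisymm hCs (Finset.singleton_subset_iff.mpr hx)
    · rintro rfl; rwa [hB] at hBP
  · rintro rfl
    refine ⟨?_, by simp, ?_⟩
    · simp only [Finset.mem_singleton]
      intro h
      exact (Finset.singleton_ne_empty i) h.symm
    · intro a ha
      rw [Finset.mem_singleton] at ha
      subst ha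
      refine ⟨{a}, ⟨by simp, by simp⟩, ?_⟩
      rintro B ⟨hB, -⟩
      exact Finset.mem_singleton.mp hB

section PartLemmas

variable {I : Finset ι} {Q : Finset (Finset ι)}

lemma IsPartitionOf.block_ne_empty (h : IsPartitionOf I Q) {B : Finset ι} (hB : B ∈ Q) :
    B ≠ ∅ := fun he => h.1 (he ▸ hB)

lemma IsPartitionOf.eq_of_mem (h : IsPartitionOf I Q) {B C : Finset ι} {a : ι}
    (hB : B ∈ Q) (hC : C ∈ Q) (haB : a ∈ B) (haC : a ∈ C) : B = C := by
  have haI : a ∈ I := h.2.1 B hB haB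
  obtain ⟨D, -, huniq⟩ := h.2.2 a haI
  rw [huniq B ⟨hB, haB⟩, huniq C ⟨hC, haC⟩]

/-- the singleton partition -/
lemma singlePart_mem (hI : I.Nonempty) : ({I} : Finset (Finset ι)) ∈ partitionsOf I := by
  rw [mem_partitionsOf]
  refine ⟨?_, by simp, ?_⟩
  · simp only [Finset.mem_singleton]
    intro h
    exact hI.ne_empty h.symm
  · intro a ha
    refine ⟨I, ⟨Finset.mem_singleton_self I, ha⟩, ?_⟩
    rintro B ⟨hB, -⟩
    exact Finset.mem_singleton.mp hB

lemma IsPartitionOf.card_one (h : IsPartitionOf I Q) (hc : Q.card = 1) : Q = {I} := by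
  obtain ⟨B, hB⟩ := Finset.card_eq_one.mp hc
  subst hB
  congr 1
  apply Finset.Subset.antisymm (h.2.1 B (Finset.mem_singleton_self B))
  intro a ha
  obtain ⟨C, ⟨hC, haC⟩, -⟩ := h.2.2 a ha
  rwa [Finset.mem_singleton.mp hC] at haC

lemma IsPartitionOf.nonempty (h : IsPartitionOf I Q) (hI : I.Nonempty) : Q.Nonempty := by
  obtain ⟨a, ha⟩ := hI
  obtain ⟨B, ⟨hB, -⟩, -⟩ := h.2.2 a ha
  exact ⟨B, hB⟩

/-- exactly one block contains a given element -/
lemma IsPartitionOf.filter_mem_card (h : IsPartitionOf I Q) {a : ι} (ha : a ∈ I) :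
    (Q.filter (fun B => a ∈ B)).card = 1 := by
  obtain ⟨B, ⟨hB, haB⟩, huniq⟩ := h.2.2 a ha
  rw [Finset.card_eq_one]
  refine ⟨B, ?_⟩
  ext C
  simp only [Finset.mem_filter, Finset.mem_singleton]
  constructor
  · rintro ⟨hC, haC⟩
    exact (huniq C ⟨hC, haC⟩)
  · rintro rfl; exact ⟨hB, haB⟩

lemma IsPartitionOf.filter_notMem_card (h : IsPartitionOf I Q) {a : ι} (ha : a ∈ I) :
    (Q.filter (fun B => a ∉ B)).card = Q.card - 1 := by
  have h1 := h.filter_mem_card ha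
  have := Finset.card_filter_add_card_filter_not (s := Q) (p := fun B => a ∈ B)
  omega

end PartLemmas

lemma chiFam_empty (lam : ι → ℕ) (s : ℕ → ℂ) : chiFam (∅ : Finset ι) lam s = 1 := by
  rw [chiFam, partitionsOf_empty]
  simp

lemma chiFam_singleton (i : ι) (lam : ι → ℕ) (s : ℕ → ℂ) :
    chiFam ({i} : Finset ι) lam s = s (lam i) := by
  rw [chiFam, partitionsOf_singleton]
  simp

section LemA

variable {s : ℕ → ℂ} {lam : ι → ℕ}

lemma compl_not_mem {I S' : Finset ι} {P : Finset (Finset ι)}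
    (hP : IsPartitionOf S' P) (hC : I \ S' ≠ ∅) : I \ S' ∉ P := by
  intro hmem
  apply hC
  have h1 : I \ S' ⊆ S' := hP.2.1 _ hmem
  have h2 : I \ S' ⊆ I \ S' := Finset.Subset.refl _
  rw [Finset.eq_empty_iff_forall_notMem]
  intro x hx
  exact (Finset.mem_sdiff.mp hx).2 (h1 hx)

lemma helper_insert {I S' : Finset ι} {P : Finset (Finset ι)}
    (hP : IsPartitionOf S' P) (hS' : S' ⊆ I) :
    IsPartitionOf I ((insert (I \ S') P).erase ∅) := by
  classical
  rcases eq_or_ne (I \ S') ∅ with hC | hC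
  · have hSI : S' = I := Finset.Subset.antisymm hS' (Finset.sdiff_eq_empty_iff_subset.mp hC)
    rw [hC, Finset.erase_insert_eq_erase, Finset.erase_eq_of_notMem hP.1]
    exact hSI ▸ hP
  · have hnot : (∅ : Finset ι) ∉ insert (I \ S') P := by
      rw [Finset.mem_insert]
      rintro (h | h)
      · exact hC h.symm
      · exact hP.1 h
    rw [Finset.erase_eq_of_notMem hnot]
    refine ⟨hnot, ?_, ?_⟩
    · intro B hB
      rcases Finset.mem_insert.mp hB with rfl | hB
      · exact Finset.sdiff_subset
      · exact (hP.2.1 B hB).trans hS'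
    · intro a ha
      by_cases haS : a ∈ S'
      · obtain ⟨B, ⟨hB, haB⟩, huniq⟩ := hP.2.2 a haS
        refine ⟨B, ⟨Finset.mem_insert_of_mem hB, haB⟩, ?_⟩
        rintro B' ⟨hB', haB'⟩
        rcases Finset.mem_insert.mp hB' with rfl | hB'
        · exact absurd ((Finset.mem_sdiff.mp haB').2 haS) not_false
        · exact huniq B' ⟨hB', haB'⟩
      · refine ⟨I \ S', ⟨Finset.mem_insert_self _ _, Finset.mem_sdiff.mpr ⟨ha, haS⟩⟩, ?_⟩
        rintro B' ⟨hB', haB'⟩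
        rcases Finset.mem_insert.mp hB' with rfl | hB'
        · rfl
        · exact absurd (hP.2.1 B' hB' haB') haS

lemma helper_erase {I : Finset ι} {Q : Finset (Finset ι)} {C : Finset ι}
    (hQ : IsPartitionOf I Q) (hC : C = ∅ ∨ C ∈ Q) :
    IsPartitionOf (I \ C) (Q.erase C) := by
  classical
  rcases hC with rfl | hC
  · rw [Finset.sdiff_empty, Finset.erase_eq_of_notMem hQ.1]
    exact hQ
  · refine ⟨fun h => hQ.1 (Finset.mem_of_mem_erase h), ?_, ?_⟩
    · intro B hB
      obtain ⟨hBC, hBQ⟩ := Finset.mem_erase.mp hB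
      intro x hx
      rw [Finset.mem_sdiff]
      refine ⟨hQ.2.1 B hBQ hx, fun hxC => hBC (hQ.eq_of_mem hBQ hC hx hxC)⟩
    · intro a ha
      obtain ⟨haI, haC⟩ := Finset.mem_sdiff.mp ha
      obtain ⟨B, ⟨hB, haB⟩, huniq⟩ := hQ.2.2 a haI
      have hBC : B ≠ C := fun h => haC (h ▸ haB)
      refine ⟨B, ⟨Finset.mem_erase.mpr ⟨hBC, hB⟩, haB⟩, ?_⟩
      rintro B' ⟨hB', haB'⟩
      exact huniq B' ⟨Finset.mem_of_mem_erase hB', haB'⟩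

lemma lemA (hs0 : s 0 = 1) {I : Finset ι} {i0 : ι} (hi0 : i0 ∈ I) :
    ∑ S ∈ (I.erase i0).powerset,
      chiFam (insert i0 S) lam s * s (∑ i ∈ I \ insert i0 S, lam i)
      = s (∑ i ∈ I, lam i) := by
  classical
  set m : Finset ι → ℂ := fun J => s (∑ i ∈ J, lam i) with hm
  set w : ℕ → ℂ := fun q => (-1 : ℂ) ^ (q - 1) * ((q - 1).factorial : ℂ) with hw
  have key : ∀ (S : Finset ι), S ∈ (I.erase i0).powerset →
      (i0 ∉ S ∧ insert i0 S ⊆ I) := by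
    intro S hS
    rw [Finset.mem_powerset] at hS
    constructor
    · intro h
      exact (Finset.mem_erase.mp (hS h)).1 rfl
    · rw [Finset.insert_subset_iff]
      exact ⟨hi0, hS.trans (Finset.erase_subset _ _)⟩
  have step1 : ∑ S ∈ (I.erase i0).powerset,
      chiFam (insert i0 S) lam s * m (I \ insert i0 S)
      = ∑ x ∈ ((I.erase i0).powerset).sigma (fun S => partitionsOf (insert i0 S)),
        w x.2.card * (∏ B ∈ x.2, m B) * m (I \ insert i0 x.1) := by
    rw [← Finset.sum_sigma' ((I.erase i0).powerset)
      (fun S => partitionsOf (insert i0 S))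
      (fun S P => w P.card * (∏ B ∈ P, m B) * m (I \ insert i0 S))]
    refine Finset.sum_congr rfl fun S hS => ?_
    rw [chiFam, Finset.sum_mul]
  rw [step1]
  have step2 : ∑ x ∈ ((I.erase i0).powerset).sigma (fun S => partitionsOf (insert i0 S)),
        w x.2.card * (∏ B ∈ x.2, m B) * m (I \ insert i0 x.1)
      = ∑ y ∈ (partitionsOf I).sigma
            (fun Q => insert (∅ : Finset ι) (Q.filter (fun B => i0 ∉ B))),
        w (y.1.erase y.2).card * (∏ B ∈ y.1.erase y.2, m B) * m y.2 := by
    refine Finset.sum_nbij'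
      (fun x => ⟨(insert (I \ insert i0 x.1) x.2).erase ∅, I \ insert i0 x.1⟩)
      (fun y => ⟨(I \ y.2).erase i0, y.1.erase y.2⟩) ?_ ?_ ?_ ?_ ?_
    · -- forward lands
      rintro ⟨S, P⟩ hx
      dsimp only                           
      rw [Finset.mem_sigma] at hx
      dsimp only at hx
      obtain ⟨hS, hP⟩ := hx
      obtain ⟨hi0S, hsub⟩ := key S hS
      rw [mem_partitionsOf] at hP
      rw [Finset.mem_sigma, mem_partitionsOf]
      refine ⟨helper_insert hP hsub, ?_⟩
      rcases eq_or_ne (I \ insert i0 S) ∅ with hC | hC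
      · rw [hC]; exact Finset.mem_insert_self _ _
      · apply Finset.mem_insert_of_mem
        rw [Finset.mem_filter]
        have hnot : (∅ : Finset ι) ∉ insert (I \ insert i0 S) P := by
          rw [Finset.mem_insert]
          rintro (h | h)
          · exact hC h.symm
          · exact hP.1 h
        rw [Finset.erase_eq_of_notMem hnot]
        refine ⟨Finset.mem_insert_self _ _, fun h => ?_⟩
        exact (Finset.mem_sdiff.mp h).2 (Finset.mem_insert_self _ _)
    · -- backward lands
      rintro ⟨Q, C⟩ hy
      dsimp only
      rw [Finset.mem_sigma, mem_partitionsOf] at hy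
      dsimp only at hy
      obtain ⟨hQ, hC⟩ := hy
      have hCQ : C = ∅ ∨ (C ∈ Q ∧ i0 ∉ C) := by
        rcases Finset.mem_insert.mp hC with rfl | h
        · exact Or.inl rfl
        · exact Or.inr (Finset.mem_filter.mp h)
      have hi0C : i0 ∉ C := by
        rcases hCQ with rfl | ⟨-, h⟩
        · exact Finset.notMem_empty i0
        · exact h
      have hins : insert i0 ((I \ C).erase i0) = I \ C := by
        apply Finset.insert_erase
        exact Finset.mem_sdiff.mpr ⟨hi0, hi0C⟩
      rw [Finset.mem_sigma, Finset.mem_powerset]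
      constructor
      · exact Finset.erase_subset_erase _ Finset.sdiff_subset
      · rw [hins, mem_partitionsOf]
        exact helper_erase hQ (hCQ.imp id And.left)
    · -- left inverse
      rintro ⟨S, P⟩ hx
      dsimp only                           
      rw [Finset.mem_sigma] at hx
      dsimp only at hx
      obtain ⟨hS, hP⟩ := hx
      obtain ⟨hi0S, hsub⟩ := key S hS
      rw [mem_partitionsOf] at hP
      have hQe : ((insert (I \ insert i0 S) P).erase ∅).erase (I \ insert i0 S) = P := by
        rcases eq_or_ne (I \ insert i0 S) ∅ with hC | hC
        · rw [hC, Finset.erase_insert_eq_erase, Finset.erase_eq_of_notMem hP.1,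
            Finset.erase_eq_of_notMem hP.1]
        · have hnot : (∅ : Finset ι) ∉ insert (I \ insert i0 S) P := by
            rw [Finset.mem_insert]
            rintro (h | h)
            · exact hC h.symm
            · exact hP.1 h
          rw [Finset.erase_eq_of_notMem hnot,
            Finset.erase_insert (compl_not_mem hP hC)]
      have hSe : (I \ (I \ insert i0 S)).erase i0 = S := by
        rw [Finset.sdiff_sdiff_eq_self hsub, Finset.erase_insert hi0S]
      exact Sigma.ext hSe (heq_of_eq hQe)
    · -- right inverse
      rintro ⟨Q, C⟩ hy
      dsimp only
      rw [Finset.mem_sigma, mem_partitionsOf] at hy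
      dsimp only at hy
      obtain ⟨hQ, hC⟩ := hy
      have hCQ : C = ∅ ∨ (C ∈ Q ∧ i0 ∉ C) := by
        rcases Finset.mem_insert.mp hC with rfl | h
        · exact Or.inl rfl
        · exact Or.inr (Finset.mem_filter.mp h)
      have hi0C : i0 ∉ C := by
        rcases hCQ with rfl | ⟨-, h⟩
        · exact Finset.notMem_empty i0
        · exact h
      have hCI : C ⊆ I := by
        rcases hCQ with rfl | ⟨h, -⟩
        · exact Finset.empty_subset I
        · exact hQ.2.1 C h
      have hins : insert i0 ((I \ C).erase i0) = I \ C := by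
        apply Finset.insert_erase
        exact Finset.mem_sdiff.mpr ⟨hi0, hi0C⟩
      have hCe : I \ (I \ C) = C := Finset.sdiff_sdiff_eq_self hCI
      have hQe : (insert C (Q.erase C)).erase ∅ = Q := by
        rcases hCQ with rfl | ⟨h, -⟩
        · rw [Finset.erase_eq_of_notMem hQ.1, Finset.erase_insert_eq_erase,
            Finset.erase_eq_of_notMem hQ.1]
        · rw [Finset.insert_erase h, Finset.erase_eq_of_notMem hQ.1]
      rw [hins, hCe, hQe]
    · -- terms agree
      rintro ⟨S, P⟩ hx
      dsimp only                           
      rw [Finset.mem_sigma] at hx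
      dsimp only at hx
      obtain ⟨hS, hP⟩ := hx
      obtain ⟨hi0S, hsub⟩ := key S hS
      rw [mem_partitionsOf] at hP
      have hQe : ((insert (I \ insert i0 S) P).erase ∅).erase (I \ insert i0 S) = P := by
        rcases eq_or_ne (I \ insert i0 S) ∅ with hC | hC
        · rw [hC, Finset.erase_insert_eq_erase, Finset.erase_eq_of_notMem hP.1,
            Finset.erase_eq_of_notMem hP.1]
        · have hnot : (∅ : Finset ι) ∉ insert (I \ insert i0 S) P := by
            rw [Finset.mem_insert]
            rintro (h | h)
            · exact hC h.symm
            · exact hP.1 h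
          rw [Finset.erase_eq_of_notMem hnot,
            Finset.erase_insert (compl_not_mem hP hC)]
      rw [hw]
      simp only [hQe]
  rw [step2, Finset.sum_sigma]
  have hIne : I.Nonempty := ⟨i0, hi0⟩
  have step3 : ∀ Q ∈ partitionsOf I,
      (∑ C ∈ insert (∅ : Finset ι) (Q.filter (fun B => i0 ∉ B)),
        w (Q.erase C).card * (∏ B ∈ Q.erase C, m B) * m C)
      = (w Q.card + ((Q.card - 1 : ℕ) : ℂ) * w (Q.card - 1)) * ∏ B ∈ Q, m B := by
    intro Q hQ
    rw [mem_partitionsOf] at hQ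
    have hemp : (∅ : Finset ι) ∉ Q.filter (fun B => i0 ∉ B) :=
      fun h => hQ.1 (Finset.mem_filter.mp h).1
    rw [Finset.sum_insert hemp]
    have hterm0 : w (Q.erase ∅).card * (∏ B ∈ Q.erase ∅, m B) * m ∅
        = w Q.card * ∏ B ∈ Q, m B := by
      rw [Finset.erase_eq_of_notMem hQ.1]
      have : m ∅ = 1 := by simp [hm, hs0]
      rw [this, mul_one]
    rw [hterm0]
    congr 1
    have hconst : ∀ C ∈ Q.filter (fun B => i0 ∉ B),
        w (Q.erase C).card * (∏ B ∈ Q.erase C, m B) * m C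
        = w (Q.card - 1) * ∏ B ∈ Q, m B := by
      intro C hC
      have hCQ : C ∈ Q := (Finset.mem_filter.mp hC).1
      rw [Finset.card_erase_of_mem hCQ, mul_assoc, Finset.prod_erase_mul _ _ hCQ]
    rw [Finset.sum_congr rfl hconst, Finset.sum_const,
        hQ.filter_notMem_card hi0, nsmul_eq_mul]
    ring
  have step4 : ∑ Q ∈ partitionsOf I,
      ∑ C ∈ insert (∅ : Finset ι) (Q.filter (fun B => i0 ∉ B)),
        w (Q.erase C).card * (∏ B ∈ Q.erase C, m B) * m C
      = ∑ Q ∈ partitionsOf I,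
        (w Q.card + ((Q.card - 1 : ℕ) : ℂ) * w (Q.card - 1)) * ∏ B ∈ Q, m B :=
    Finset.sum_congr rfl step3
  have hzero : ∀ Q ∈ partitionsOf I, Q ≠ {I} →
      (w Q.card + ((Q.card - 1 : ℕ) : ℂ) * w (Q.card - 1)) * ∏ B ∈ Q, m B = 0 := by
    intro Q hQmem hQne
    rw [mem_partitionsOf] at hQmem
    have hcard : Q.card ≠ 1 := fun h => hQne (hQmem.card_one h)
    have hposq : 1 ≤ Q.card := Finset.card_pos.mpr (hQmem.nonempty hIne)
    obtain ⟨k, hk⟩ : ∃ k, Q.card = k + 2 := ⟨Q.card - 2, by omega⟩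
    have hcoef : w Q.card + ((Q.card - 1 : ℕ) : ℂ) * w (Q.card - 1) = 0 := by
      rw [hk, hw]
      have h1 : (k + 2 - 1) = k + 1 := by omega
      have h2 : (k + 1 - 1) = k := by omega
      simp only [h1, h2]
      push_cast [Nat.factorial_succ k]
      ring
    rw [hcoef, zero_mul]
  calc ∑ Q ∈ partitionsOf I,
      ∑ C ∈ insert (∅ : Finset ι) (Q.filter (fun B => i0 ∉ B)),
        w ((⟨Q, C⟩ : Σ _ : Finset (Finset ι), Finset ι).1.erase
            (⟨Q, C⟩ : Σ _ : Finset (Finset ι), Finset ι).2).card *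
          (∏ B ∈ (⟨Q, C⟩ : Σ _ : Finset (Finset ι), Finset ι).1.erase
            (⟨Q, C⟩ : Σ _ : Finset (Finset ι), Finset ι).2, m B) *
          m (⟨Q, C⟩ : Σ _ : Finset (Finset ι), Finset ι).2
      = ∑ Q ∈ partitionsOf I,
        (w Q.card + ((Q.card - 1 : ℕ) : ℂ) * w (Q.card - 1)) * ∏ B ∈ Q, m B := step4
    _ = (w ({I} : Finset (Finset ι)).card +
          ((({I} : Finset (Finset ι)).card - 1 : ℕ) : ℂ) *
            w (({I} : Finset (Finset ι)).card - 1)) * ∏ B ∈ ({I} : Finset (Finset ι)), m B :=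
      Finset.sum_eq_single_of_mem _ (singlePart_mem hIne) hzero
    _ = s (∑ i ∈ I, lam i) := by
      simp [hw, hm]

end LemA

section More

variable {s : ℕ → ℂ} {lam : ι → ℕ}

lemma lemA' (hs0 : s 0 = 1) {I : Finset ι} {i0 : ι} (hi0 : i0 ∈ I) :
    chiFam I lam s = s (∑ i ∈ I, lam i)
      - ∑ S ∈ ((I.erase i0).powerset).erase (I.erase i0),
          chiFam (insert i0 S) lam s * s (∑ i ∈ I \ insert i0 S, lam i) := by
  have h := lemA (lam := lam) hs0 hi0
  rw [← Finset.add_sum_erase _ _ (Finset.mem_powerset_self (I.erase i0))] at h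
  rw [Finset.insert_erase hi0, Finset.sdiff_self, Finset.sum_empty, hs0, mul_one] at h
  linear_combination h

lemma lemE (hs0 : s 0 = 1) :
    ∀ N {I : Finset ι}, I.card ≤ N → ∀ {lam : ι → ℕ} {j0 : ι}, j0 ∈ I → 2 ≤ I.card →
      lam j0 = 0 → chiFam I lam s = 0 := by
  intro N
  induction N with
  | zero => intro I hI lam j0 hj0 h2 hz; omega
  | succ N IH =>
    intro I hI lam j0 hj0 h2 hz
    rw [lemA' hs0 hj0]
    have hJne : (I.erase j0).Nonempty := by
      rw [← Finset.card_pos, Finset.card_erase_of_mem hj0]; omega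
    have hvanish : ∀ S ∈ ((I.erase j0).powerset).erase (I.erase j0), S ≠ ∅ →
        chiFam (insert j0 S) lam s * s (∑ i ∈ I \ insert j0 S, lam i) = 0 := by
      intro S hS hSne
      obtain ⟨hne, hpow⟩ := Finset.mem_erase.mp hS
      rw [Finset.mem_powerset] at hpow
      have hj0S : j0 ∉ S := fun h => (Finset.mem_erase.mp (hpow h)).1 rfl
      have hcard : (insert j0 S).card = S.card + 1 := Finset.card_insert_of_notMem hj0S
      have hSlt : S.card < (I.erase j0).card := Finset.card_lt_card ⟨hpow, fun h => hne (Finset.Subset.antisymm hpow h)⟩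
      have hle : (insert j0 S).card ≤ N := by
        rw [hcard]
        rw [Finset.card_erase_of_mem hj0] at hSlt
        omega
      have h2' : 2 ≤ (insert j0 S).card := by
        rw [hcard]
        have := Finset.card_pos.mpr (Finset.nonempty_iff_ne_empty.mpr hSne)
        omega
      rw [IH hle (Finset.mem_insert_self j0 S) h2' hz, zero_mul]
    rw [Finset.sum_eq_single_of_mem (∅ : Finset ι) ?hmem ?hrest]
    case hmem =>
      rw [Finset.mem_erase]
      exact ⟨fun h => hJne.ne_empty h.symm, Finset.mem_powerset.mpr (Finset.empty_subset _)⟩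
    case hrest => exact hvanish
    have hie : insert j0 (∅ : Finset ι) = {j0} := rfl
    rw [hie, chiFam_singleton, hz, hs0, one_mul]
    have hsd : I \ {j0} = I.erase j0 := (Finset.erase_eq I j0).symm
    rw [hsd]
    have hsum : ∑ i ∈ I, lam i = ∑ i ∈ I.erase j0, lam i := by
      rw [← Finset.add_sum_erase _ _ hj0, hz, zero_add]
    rw [hsum, sub_self]

end More

section Card

variable {s : ℕ → ℂ}

/-- sum over powerset of a function of cardinality -/
lemma sum_powerset_card (J : Finset ι) (F : ℕ → ℂ) :
    ∑ S ∈ J.powerset, F S.card = ∑ k ∈ Finset.range (J.card + 1), (J.card.choose k : ℂ) * F k := by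
  rw [Finset.sum_powerset]
  refine Finset.sum_congr rfl fun k _ => ?_
  rw [Finset.sum_powersetCard, nsmul_eq_mul]

lemma step_formula (hs0 : s 0 = 1) {n : ℕ} {I : Finset ι} {lam : ι → ℕ}
    (h1 : ∀ i ∈ I, lam i = 1) (hcard : I.card = n + 1)
    (IH : ∀ S : Finset ι, S ⊆ I → S.card ≤ n → chiFam S lam s = chiOnes s S.card) :
    chiFam I lam s = s (n + 1) -
      (∑ k ∈ Finset.range (n + 1), (n.choose k : ℂ) * chiOnes s (k + 1) * s (n - k)
        - chiOnes s (n + 1)) := by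
  obtain ⟨i0, hi0⟩ := Finset.card_pos.mp (by omega : 0 < I.card)
  have hsumI : ∀ J : Finset ι, J ⊆ I → ∑ i ∈ J, lam i = J.card := by
    intro J hJ
    rw [Finset.sum_congr rfl (fun i hi => h1 i (hJ hi)), Finset.sum_const, smul_eq_mul, mul_one]
  have hJcard : (I.erase i0).card = n := by rw [Finset.card_erase_of_mem hi0]; omega
  rw [lemA' hs0 hi0, hsumI I (Finset.Subset.refl I), hcard]
  congr 1
  have hterm : ∀ S ∈ ((I.erase i0).powerset).erase (I.erase i0),
      chiFam (insert i0 S) lam s * s (∑ i ∈ I \ insert i0 S, lam i)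
        = chiOnes s (S.card + 1) * s (n - S.card) := by
    intro S hS
    obtain ⟨hne, hpow⟩ := Finset.mem_erase.mp hS
    rw [Finset.mem_powerset] at hpow
    have hi0S : i0 ∉ S := fun h => (Finset.mem_erase.mp (hpow h)).1 rfl
    have hsub : insert i0 S ⊆ I := by
      rw [Finset.insert_subset_iff]
      exact ⟨hi0, hpow.trans (Finset.erase_subset _ _)⟩
    have hcardS : (insert i0 S).card = S.card + 1 := Finset.card_insert_of_notMem hi0S
    have hSlt : S.card < n := by
      rw [← hJcard]
      exact Finset.card_lt_card ⟨hpow, fun h => hne (Finset.Subset.antisymm hpow h)⟩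
    have hchi : chiFam (insert i0 S) lam s = chiOnes s (S.card + 1) := by
      rw [IH _ hsub (by omega), hcardS]
    have hsd : ∑ i ∈ I \ insert i0 S, lam i = n - S.card := by
      rw [hsumI _ Finset.sdiff_subset, Finset.card_sdiff_of_subset hsub, hcard, hcardS]
      omega
    rw [hchi, hsd]
  rw [Finset.sum_congr rfl hterm]
  have htop : chiOnes s ((I.erase i0).card + 1) * s (n - (I.erase i0).card)
      = chiOnes s (n + 1) := by
    rw [hJcard, Nat.sub_self, hs0, mul_one]
  rw [Finset.sum_erase_eq_sub (Finset.mem_powerset_self _), htop,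
    sum_powerset_card (I.erase i0) (fun k => chiOnes s (k + 1) * s (n - k)), hJcard]
  rw [Finset.sum_congr rfl (fun k _ => (mul_assoc _ _ _).symm)]

lemma chiFam_card (hs0 : s 0 = 1) :
    ∀ (n : ℕ) {ι : Type} [DecidableEq ι] (I : Finset ι) (lam : ι → ℕ),
      (∀ i ∈ I, lam i = 1) → I.card = n → chiFam I lam s = chiOnes s n := by
  intro n
  induction n using Nat.strong_induction_on with
  | _ n IH =>
    intro ι _ I lam h1 hcard
    match n, hcard with
    | 0, hcard =>
      rw [Finset.card_eq_zero.mp hcard, chiFam_empty]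
      rw [chiOnes, Finset.univ_eq_empty, chiFam_empty]
    | (m + 1), hcard =>
      have hIH : ∀ S : Finset ι, S ⊆ I → S.card ≤ m → chiFam S lam s = chiOnes s S.card :=
        fun S hS hSm => IH S.card (by omega) S lam (fun i hi => h1 i (hS hi)) rfl
      have hIHu : ∀ S : Finset (Fin (m + 1)), S ⊆ Finset.univ → S.card ≤ m →
          chiFam S (fun _ => 1) s = chiOnes s S.card :=
        fun S hS hSm => IH S.card (by omega) S _ (fun _ _ => rfl) rfl
      have huniv : chiOnes s (m + 1) = s (m + 1) -
          (∑ k ∈ Finset.range (m + 1), (m.choose k : ℂ) * chiOnes s (k + 1) * s (m - k)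
            - chiOnes s (m + 1)) :=
        step_formula hs0 (fun _ _ => rfl) (by simp) hIHu
      rw [step_formula hs0 h1 hcard hIH, ← huniv]

/-- the moment-cumulant recursion for the all-ones case -/
lemma moment_rec (hs0 : s 0 = 1) (n : ℕ) :
    s (n + 1) = ∑ k ∈ Finset.range (n + 1), (n.choose k : ℂ) * chiOnes s (k + 1) * s (n - k) := by
  have h := step_formula (ι := Fin (n + 1)) (n := n) hs0 (lam := fun _ => 1) (I := Finset.univ)
    (fun _ _ => rfl) (by simp)
    (fun S hS hSm => chiFam_card hs0 S.card S _ (fun _ _ => rfl) rfl)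
  have : chiOnes s (n + 1) = chiFam (Finset.univ : Finset (Fin (n + 1))) (fun _ => 1) s := rfl
  rw [← this] at h
  linear_combination -h

end Card

section Rec

variable {s : ℕ → ℂ}

lemma chiOnes_one : chiOnes s 1 = s 1 := by
  have h : (Finset.univ : Finset (Fin 1)) = {0} := rfl
  rw [chiOnes, h, chiFam_singleton]

lemma chiOnes_zero : chiOnes s 0 = 1 := by
  rw [chiOnes, Finset.univ_eq_empty, chiFam_empty]

lemma three_term (hs0 : s 0 = 1) (h3 : ∀ m : ℕ, 3 ≤ m → chiOnes s m = 0) (n : ℕ) :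
    s (n + 2) = s 1 * s (n + 1) + (n + 1 : ℂ) * chiOnes s 2 * s n := by
  have h := moment_rec hs0 (n + 1)
  rw [Finset.sum_range_succ', Finset.sum_range_succ'] at h
  have hz : ∑ k ∈ Finset.range n,
      ((n + 1).choose (k + 1 + 1) : ℂ) * chiOnes s (k + 1 + 1 + 1) * s (n + 1 - (k + 1 + 1)) = 0 := by
    refine Finset.sum_eq_zero fun k _ => ?_
    rw [h3 (k + 1 + 1 + 1) (by omega), mul_zero, zero_mul]
  rw [hz, zero_add] at h
  norm_num at h
  rw [h, chiOnes_one]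
  push_cast
  ring

section LemD

variable {s : ℕ → ℂ} {a c : ℂ}

lemma scalar_id (hs0 : s 0 = 1) (hs1 : s 1 = a)
    (hrec : ∀ n : ℕ, s (n + 2) = a * s (n + 1) + (n + 1 : ℂ) * c * s n)
    (p t : ℕ) (hp : 1 ≤ p) :
    s (p + t) = a * s ((p - 1) + t) + c * ((p - 1 : ℕ) : ℂ) * s ((p - 2) + t)
      + c * (t : ℂ) * s (p + t - 2) := by
  obtain ⟨v, rfl⟩ : ∃ v, p = v + 1 := ⟨p - 1, by omega⟩
  rcases v with _ | w
  · -- p = 1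
    rcases t with _ | r
    · norm_num [hs0, hs1]
    · -- t = r + 1
      have h := hrec r
      norm_num
      have e1 : 1 + (r + 1) = r + 2 := by omega
      have e4 : 1 + (r + 1) - 2 = r := by omega
      rw [e4, e1]
      push_cast [] at h ⊢
      linear_combination h
  · -- p = w + 2
    have h := hrec (w + t)
    norm_num
    have e1 : w + 1 + 1 + t = w + t + 2 := by omega
    have e2 : w + 1 + t = w + t + 1 := by omega
    have e3 : w + 1 + 1 + t - 2 = w + t := by omega
    rw [e3, e1, e2]
    push_cast [] at h ⊢
    linear_combination h

lemma lemD (hs0 : s 0 = 1) (hs1 : s 1 = a)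
    (hrec : ∀ n : ℕ, s (n + 2) = a * s (n + 1) + (n + 1 : ℂ) * c * s n) :
    ∀ (N : ℕ) (I : Finset ι), I.card = N → ∀ (lam : ι → ℕ) (i0 : ι), i0 ∈ I → 1 ≤ lam i0 →
      chiFam I lam s =
        a * chiFam I (Function.update lam i0 (lam i0 - 1)) s
        + c * ((lam i0 - 1 : ℕ) : ℂ) * chiFam I (Function.update lam i0 (lam i0 - 2)) s
        + c * ∑ j ∈ I.erase i0, (lam j : ℂ) *
            chiFam (I.erase j) (Function.update lam i0 (lam i0 + lam j - 2)) s := by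
  intro N
  induction N using Nat.strong_induction_on with
  | _ N IH =>
  intro I hIN lam i0 hi0 hl1
  -- basic facts about the index sets
  have hkey : ∀ S ∈ ((I.erase i0).powerset).erase (I.erase i0),
      i0 ∉ S ∧ S ⊆ I.erase i0 ∧ S ≠ I.erase i0 ∧ insert i0 S ⊆ I ∧
        (insert i0 S).card < N := by
    intro S hS
    obtain ⟨hne, hpow⟩ := Finset.mem_erase.mp hS
    rw [Finset.mem_powerset] at hpow
    have hi0S : i0 ∉ S := fun h => (Finset.mem_erase.mp (hpow h)).1 rfl
    have hsub : insert i0 S ⊆ I := by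
      rw [Finset.insert_subset_iff]
      exact ⟨hi0, hpow.trans (Finset.erase_subset _ _)⟩
    have hlt : S.card < (I.erase i0).card :=
      Finset.card_lt_card ⟨hpow, fun h => hne (Finset.Subset.antisymm hpow h)⟩
    have hcard : (insert i0 S).card < N := by
      rw [Finset.card_insert_of_notMem hi0S]
      rw [Finset.card_erase_of_mem hi0, hIN] at hlt
      have hNpos : 0 < N := hIN ▸ Finset.card_pos.mpr ⟨i0, hi0⟩
      omega
    exact ⟨hi0S, hpow, hne, hsub, hcard⟩
  -- IH expansion of each small chi
  have hexp : ∀ S ∈ ((I.erase i0).powerset).erase (I.erase i0),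
      chiFam (insert i0 S) lam s =
        a * chiFam (insert i0 S) (Function.update lam i0 (lam i0 - 1)) s
        + c * ((lam i0 - 1 : ℕ) : ℂ) * chiFam (insert i0 S) (Function.update lam i0 (lam i0 - 2)) s
        + c * ∑ j ∈ S, (lam j : ℂ) *
            chiFam ((insert i0 S).erase j) (Function.update lam i0 (lam i0 + lam j - 2)) s := by
    intro S hS
    obtain ⟨hi0S, hpow, hne, hsub, hcard⟩ := hkey S hS
    have h := IH (insert i0 S).card hcard (insert i0 S) rfl lam i0
      (Finset.mem_insert_self i0 S) hl1
    rwa [Finset.erase_insert hi0S] at h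
  -- expansions of the four chiFam's
  have e0 := lemA' (lam := lam) hs0 hi0
  have e1 : chiFam I (Function.update lam i0 (lam i0 - 1)) s
      = s (∑ i ∈ I, Function.update lam i0 (lam i0 - 1) i)
        - ∑ S ∈ ((I.erase i0).powerset).erase (I.erase i0),
            chiFam (insert i0 S) (Function.update lam i0 (lam i0 - 1)) s
              * s (∑ i ∈ I \ insert i0 S, lam i) := by
    rw [lemA' (lam := Function.update lam i0 (lam i0 - 1)) hs0 hi0]
    congr 1
    refine Finset.sum_congr rfl fun S hS => ?_
    exact congrArg (fun z => chiFam (insert i0 S) (Function.update lam i0 (lam i0 - 1)) s * s z)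
      (Finset.sum_update_of_notMem (by simp) lam _)
  have e2 : chiFam I (Function.update lam i0 (lam i0 - 2)) s
      = s (∑ i ∈ I, Function.update lam i0 (lam i0 - 2) i)
        - ∑ S ∈ ((I.erase i0).powerset).erase (I.erase i0),
            chiFam (insert i0 S) (Function.update lam i0 (lam i0 - 2)) s
              * s (∑ i ∈ I \ insert i0 S, lam i) := by
    rw [lemA' (lam := Function.update lam i0 (lam i0 - 2)) hs0 hi0]
    congr 1
    refine Finset.sum_congr rfl fun S hS => ?_
    exact congrArg (fun z => chiFam (insert i0 S) (Function.update lam i0 (lam i0 - 2)) s * s z)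
      (Finset.sum_update_of_notMem (by simp) lam _)
  have e3 : ∀ j ∈ I.erase i0,
      chiFam (I.erase j) (Function.update lam i0 (lam i0 + lam j - 2)) s
      = s (∑ i ∈ I.erase j, Function.update lam i0 (lam i0 + lam j - 2) i)
        - ∑ T ∈ (((I.erase i0).erase j).powerset).erase ((I.erase i0).erase j),
            chiFam (insert i0 T) (Function.update lam i0 (lam i0 + lam j - 2)) s
              * s (∑ i ∈ (I.erase j) \ insert i0 T, lam i) := by
    intro j hj
    obtain ⟨hji0, hjI⟩ := Finset.mem_erase.mp hj
    have hi0' : i0 ∈ I.erase j := Finset.mem_erase.mpr ⟨fun h => hji0 h.symm, hi0⟩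
    rw [lemA' (lam := Function.update lam i0 (lam i0 + lam j - 2)) hs0 hi0',
      Finset.erase_right_comm]
    congr 1
    refine Finset.sum_congr rfl fun T hT => ?_
    exact congrArg
      (fun z => chiFam (insert i0 T) (Function.update lam i0 (lam i0 + lam j - 2)) s * s z)
      (Finset.sum_update_of_notMem (by simp) lam _)
  -- the moment identity
  have hmid : s (∑ i ∈ I, lam i)
      = a * s (∑ i ∈ I, Function.update lam i0 (lam i0 - 1) i)
        + c * ((lam i0 - 1 : ℕ) : ℂ) * s (∑ i ∈ I, Function.update lam i0 (lam i0 - 2) i)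
        + c * ∑ j ∈ I.erase i0, (lam j : ℂ) *
            s (∑ i ∈ I.erase j, Function.update lam i0 (lam i0 + lam j - 2) i) := by
    have ht : ∑ i ∈ I, lam i = lam i0 + ∑ i ∈ I.erase i0, lam i :=
      (Finset.add_sum_erase I lam hi0).symm
    have h1 : ∑ i ∈ I, Function.update lam i0 (lam i0 - 1) i
        = (lam i0 - 1) + ∑ i ∈ I.erase i0, lam i := by
      rw [Finset.sum_update_of_mem hi0, ← Finset.erase_eq]
    have h2 : ∑ i ∈ I, Function.update lam i0 (lam i0 - 2) i
        = (lam i0 - 2) + ∑ i ∈ I.erase i0, lam i := by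
      rw [Finset.sum_update_of_mem hi0, ← Finset.erase_eq]
    have hj : ∀ j ∈ I.erase i0, (lam j : ℂ) *
        s (∑ i ∈ I.erase j, Function.update lam i0 (lam i0 + lam j - 2) i)
        = (lam j : ℂ) * s (lam i0 + (∑ i ∈ I.erase i0, lam i) - 2) := by
      intro j hj
      obtain ⟨hji0, hjI⟩ := Finset.mem_erase.mp hj
      rcases Nat.eq_zero_or_pos (lam j) with hz | hpos
      · rw [hz]; push_cast; rw [zero_mul, zero_mul]
      · congr 2
        have hi0' : i0 ∈ I.erase j := Finset.mem_erase.mpr ⟨fun h => hji0 h.symm, hi0⟩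
        rw [Finset.sum_update_of_mem hi0', ← Finset.erase_eq, Finset.erase_right_comm]
        have hadd : lam j + ∑ i ∈ (I.erase i0).erase j, lam i = ∑ i ∈ I.erase i0, lam i :=
          Finset.add_sum_erase _ lam hj
        omega
    rw [Finset.sum_congr rfl hj, ← Finset.sum_mul, ← Nat.cast_sum, ht, h1, h2]
    have hadd0 : lam i0 + ∑ i ∈ I.erase i0, lam i - 2
        = lam i0 + (∑ i ∈ I.erase i0, lam i) - 2 := by omega
    rw [hadd0]
    linear_combination scalar_id hs0 hs1 hrec (lam i0) (∑ i ∈ I.erase i0, lam i) hl1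
  -- the swap of double sums
  have hswap : ∑ S ∈ ((I.erase i0).powerset).erase (I.erase i0),
      (∑ j ∈ S, (lam j : ℂ) *
          chiFam ((insert i0 S).erase j) (Function.update lam i0 (lam i0 + lam j - 2)) s)
        * s (∑ i ∈ I \ insert i0 S, lam i)
      = ∑ j ∈ I.erase i0, (lam j : ℂ) *
          ∑ T ∈ (((I.erase i0).erase j).powerset).erase ((I.erase i0).erase j),
            chiFam (insert i0 T) (Function.update lam i0 (lam i0 + lam j - 2)) s
              * s (∑ i ∈ (I.erase j) \ insert i0 T, lam i) := by
    have l1 : ∀ S ∈ ((I.erase i0).powerset).erase (I.erase i0),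
        (∑ j ∈ S, (lam j : ℂ) *
            chiFam ((insert i0 S).erase j) (Function.update lam i0 (lam i0 + lam j - 2)) s)
          * s (∑ i ∈ I \ insert i0 S, lam i)
        = ∑ j ∈ S, (lam j : ℂ) *
            chiFam ((insert i0 S).erase j) (Function.update lam i0 (lam i0 + lam j - 2)) s
              * s (∑ i ∈ I \ insert i0 S, lam i) := fun S _ => Finset.sum_mul _ _ _
    have r1 : ∀ j ∈ I.erase i0, (lam j : ℂ) *
        ∑ T ∈ (((I.erase i0).erase j).powerset).erase ((I.erase i0).erase j),
          chiFam (insert i0 T) (Function.update lam i0 (lam i0 + lam j - 2)) s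
            * s (∑ i ∈ (I.erase j) \ insert i0 T, lam i)
        = ∑ T ∈ (((I.erase i0).erase j).powerset).erase ((I.erase i0).erase j),
          (lam j : ℂ) * (chiFam (insert i0 T) (Function.update lam i0 (lam i0 + lam j - 2)) s
            * s (∑ i ∈ (I.erase j) \ insert i0 T, lam i)) := fun j _ => Finset.mul_sum _ _ _
    rw [Finset.sum_congr rfl l1, Finset.sum_congr rfl r1]
    rw [Finset.sum_sigma' (((I.erase i0).powerset).erase (I.erase i0)) (fun S => S)
      (fun S j => (lam j : ℂ) *
        chiFam ((insert i0 S).erase j) (Function.update lam i0 (lam i0 + lam j - 2)) s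
          * s (∑ i ∈ I \ insert i0 S, lam i))]
    rw [Finset.sum_sigma' (I.erase i0)
      (fun j => (((I.erase i0).erase j).powerset).erase ((I.erase i0).erase j))
      (fun j T => (lam j : ℂ) *
        (chiFam (insert i0 T) (Function.update lam i0 (lam i0 + lam j - 2)) s
          * s (∑ i ∈ (I.erase j) \ insert i0 T, lam i)))]
    refine Finset.sum_nbij' (fun x => ⟨x.2, x.1.erase x.2⟩) (fun y => ⟨insert y.1 y.2, y.1⟩)
      ?_ ?_ ?_ ?_ ?_
    · rintro ⟨S, j⟩ hx
      dsimp only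
      rw [Finset.mem_sigma] at hx
      obtain ⟨hS, hjS⟩ := hx
      obtain ⟨hi0S, hpow, hne, -, -⟩ := hkey S hS
      rw [Finset.mem_sigma]
      have hjJ : j ∈ I.erase i0 := hpow hjS
      refine ⟨hjJ, Finset.mem_erase.mpr ⟨?_, Finset.mem_powerset.mpr ?_⟩⟩
      · intro h
        apply hne
        apply Finset.Subset.antisymm hpow
        intro x hxJ
        by_cases hxj : x = j
        · exact hxj ▸ hjS
        · have : x ∈ (I.erase i0).erase j := Finset.mem_erase.mpr ⟨hxj, hxJ⟩
          rw [← h] at this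
          exact Finset.mem_of_mem_erase this
      · exact Finset.erase_subset_erase j hpow
    · rintro ⟨j, T⟩ hy
      dsimp only
      rw [Finset.mem_sigma] at hy
      obtain ⟨hjJ, hT⟩ := hy
      obtain ⟨hne, hpow⟩ := Finset.mem_erase.mp hT
      rw [Finset.mem_powerset] at hpow
      have hjT : j ∉ T := fun h => (Finset.mem_erase.mp (hpow h)).1 rfl
      rw [Finset.mem_sigma]
      dsimp only
      constructor
      · rw [Finset.mem_erase, Finset.mem_powerset]
        constructor
        · intro h
          apply hne
          have : T = (insert j T).erase j := (Finset.erase_insert hjT).symm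
          rw [this, h]
        · rw [Finset.insert_subset_iff]
          exact ⟨hjJ, hpow.trans (Finset.erase_subset _ _)⟩
      · exact Finset.mem_insert_self j T
    · rintro ⟨S, j⟩ hx
      rw [Finset.mem_sigma] at hx
      dsimp only
      exact Sigma.ext (Finset.insert_erase hx.2) (HEq.refl _)
    · rintro ⟨j, T⟩ hy
      rw [Finset.mem_sigma] at hy
      obtain ⟨hjJ, hT⟩ := hy
      obtain ⟨hne, hpow⟩ := Finset.mem_erase.mp hT
      rw [Finset.mem_powerset] at hpow
      have hjT : j ∉ T := fun h => (Finset.mem_erase.mp (hpow h)).1 rfl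
      dsimp only
      exact Sigma.ext rfl (heq_of_eq (Finset.erase_insert hjT))
    · rintro ⟨S, j⟩ hx
      dsimp only
      rw [Finset.mem_sigma] at hx
      obtain ⟨hS, hjS⟩ := hx
      obtain ⟨hi0S, hpow, hne, -, -⟩ := hkey S hS
      have hji0' : j ≠ i0 := (Finset.mem_erase.mp (hpow hjS)).1
      have heq1 : (insert i0 S).erase j = insert i0 (S.erase j) :=
        Finset.erase_insert_of_ne (fun h => hji0' h.symm)
      have heq2 : (I.erase j) \ insert i0 (S.erase j) = I \ insert i0 S := by
        ext x
        simp only [Finset.mem_sdiff, Finset.mem_erase, Finset.mem_insert]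
        by_cases hxj : x = j
        · subst hxj
          exact iff_of_false (fun h => h.1.1 rfl) (fun h => h.2 (Or.inr hjS))
        · constructor
          · rintro ⟨⟨-, hxI⟩, hn⟩
            refine ⟨hxI, ?_⟩
            rintro (h | hxS)
            · exact hn (Or.inl h)
            · exact hn (Or.inr ⟨hxj, hxS⟩)
          · rintro ⟨hxI, hn⟩
            refine ⟨⟨hxj, hxI⟩, ?_⟩
            rintro (h | hxS)
            · exact hn (Or.inl h)
            · exact hn (Or.inr hxS.2)
      rw [heq1, heq2, mul_assoc]
  -- final assembly
  have e3' : ∑ j ∈ I.erase i0, (lam j : ℂ) *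
        chiFam (I.erase j) (Function.update lam i0 (lam i0 + lam j - 2)) s
      = ∑ j ∈ I.erase i0, (lam j : ℂ) *
          (s (∑ i ∈ I.erase j, Function.update lam i0 (lam i0 + lam j - 2) i)
            - ∑ T ∈ (((I.erase i0).erase j).powerset).erase ((I.erase i0).erase j),
                chiFam (insert i0 T) (Function.update lam i0 (lam i0 + lam j - 2)) s
                  * s (∑ i ∈ (I.erase j) \ insert i0 T, lam i)) :=
    Finset.sum_congr rfl fun j hj => by rw [e3 j hj]
  rw [e0, e1, e2, e3']
  have hX0 : ∑ S ∈ ((I.erase i0).powerset).erase (I.erase i0),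
      chiFam (insert i0 S) lam s * s (∑ i ∈ I \ insert i0 S, lam i)
      = a * ∑ S ∈ ((I.erase i0).powerset).erase (I.erase i0),
          chiFam (insert i0 S) (Function.update lam i0 (lam i0 - 1)) s
            * s (∑ i ∈ I \ insert i0 S, lam i)
        + c * ((lam i0 - 1 : ℕ) : ℂ) * ∑ S ∈ ((I.erase i0).powerset).erase (I.erase i0),
            chiFam (insert i0 S) (Function.update lam i0 (lam i0 - 2)) s
              * s (∑ i ∈ I \ insert i0 S, lam i)
        + c * ∑ S ∈ ((I.erase i0).powerset).erase (I.erase i0),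
            (∑ j ∈ S, (lam j : ℂ) *
              chiFam ((insert i0 S).erase j) (Function.update lam i0 (lam i0 + lam j - 2)) s)
              * s (∑ i ∈ I \ insert i0 S, lam i) := by
    rw [Finset.mul_sum, Finset.mul_sum, Finset.mul_sum, ← Finset.sum_add_distrib,
      ← Finset.sum_add_distrib]
    refine Finset.sum_congr rfl fun S hS => ?_
    rw [hexp S hS]
    ring
  have hsplit : ∑ j ∈ I.erase i0, (lam j : ℂ) *
      (s (∑ i ∈ I.erase j, Function.update lam i0 (lam i0 + lam j - 2) i)
        - ∑ T ∈ (((I.erase i0).erase j).powerset).erase ((I.erase i0).erase j),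
            chiFam (insert i0 T) (Function.update lam i0 (lam i0 + lam j - 2)) s
              * s (∑ i ∈ (I.erase j) \ insert i0 T, lam i))
      = (∑ j ∈ I.erase i0, (lam j : ℂ) *
          s (∑ i ∈ I.erase j, Function.update lam i0 (lam i0 + lam j - 2) i))
        - ∑ j ∈ I.erase i0, (lam j : ℂ) *
          ∑ T ∈ (((I.erase i0).erase j).powerset).erase ((I.erase i0).erase j),
            chiFam (insert i0 T) (Function.update lam i0 (lam i0 + lam j - 2)) s
              * s (∑ i ∈ (I.erase j) \ insert i0 T, lam i) := by
    rw [← Finset.sum_sub_distrib]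
    exact Finset.sum_congr rfl fun j hj => by ring
  rw [hsplit]
  linear_combination hmid - hX0 - c * hswap

end LemD

section Final

variable {s : ℕ → ℂ}

lemma lemV (hs0 : s 0 = 1) (h3 : ∀ m : ℕ, 3 ≤ m → chiOnes s m = 0) :
    ∀ (M : ℕ) (I : Finset ι) (lam : ι → ℕ), (∑ i ∈ I, lam i) = M →
      (∑ i ∈ I, lam i) + 2 < 2 * I.card → chiFam I lam s = 0 := by
  intro M
  induction M using Nat.strong_induction_on with
  | _ M IHM =>
  intro I lam hM hlt
  have hcard2 : 2 ≤ I.card := by omega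
  by_cases hex : ∃ j ∈ I, lam j = 0
  · obtain ⟨j, hj, hz⟩ := hex
    exact lemE hs0 I.card (le_refl _) hj hcard2 hz
  · push_neg at hex
    obtain ⟨i0, hi0⟩ := Finset.card_pos.mp (by omega : 0 < I.card)
    have hl1 : 1 ≤ lam i0 := Nat.one_le_iff_ne_zero.mpr (hex i0 hi0)
    have hrec := three_term hs0 h3
    rw [lemD hs0 rfl hrec I.card I rfl lam i0 hi0 hl1]
    have hadd0 : lam i0 + ∑ i ∈ I.erase i0, lam i = M :=
      hM ▸ Finset.add_sum_erase I lam hi0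
    -- term 1
    have h1 : chiFam I (Function.update lam i0 (lam i0 - 1)) s = 0 := by
      have hsum : ∑ i ∈ I, Function.update lam i0 (lam i0 - 1) i = M - 1 := by
        rw [Finset.sum_update_of_mem hi0, ← Finset.erase_eq]
        omega
      exact IHM (M - 1) (by omega) I _ hsum (by omega)
    -- term 2
    have h2 : chiFam I (Function.update lam i0 (lam i0 - 2)) s = 0 := by
      have hsum : ∑ i ∈ I, Function.update lam i0 (lam i0 - 2) i = M - min (lam i0) 2 := by
        rw [Finset.sum_update_of_mem hi0, ← Finset.erase_eq]
        omega
      exact IHM (M - min (lam i0) 2) (by omega) I _ hsum (by omega)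
    -- term 3
    have h3' : ∀ j ∈ I.erase i0, (lam j : ℂ) *
        chiFam (I.erase j) (Function.update lam i0 (lam i0 + lam j - 2)) s = 0 := by
      intro j hj
      obtain ⟨hji0, hjI⟩ := Finset.mem_erase.mp hj
      have hlj : 1 ≤ lam j := Nat.one_le_iff_ne_zero.mpr (hex j hjI)
      have hi0' : i0 ∈ I.erase j := Finset.mem_erase.mpr ⟨fun h => hji0 h.symm, hi0⟩
      have haddj : lam j + ∑ i ∈ (I.erase i0).erase j, lam i = ∑ i ∈ I.erase i0, lam i :=
        Finset.add_sum_erase _ lam hj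
      have hsum : ∑ i ∈ I.erase j, Function.update lam i0 (lam i0 + lam j - 2) i = M - 2 := by
        rw [Finset.sum_update_of_mem hi0', ← Finset.erase_eq, Finset.erase_right_comm]
        omega
      have hcardj : (I.erase j).card = I.card - 1 := Finset.card_erase_of_mem hjI
      have := IHM (M - 2) (by omega) (I.erase j) _ hsum (by rw [hsum, hcardj]; omega)
      rw [this, mul_zero]
    rw [h1, h2, Finset.sum_congr rfl h3', Finset.sum_const_zero]
    ring

end Final


/-- if `{s}` is of type `T[ω]` (i.e. `s 0 = 1`, `χ(m,s) = 0` for all `m ≥ 3`,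
and `χ(2,s) ≠ 0`), then `χ(λ,s) = 0` for every tuple `λ` of positive integers with
`|λ| < 2·len(λ) − 2`. -/
theorem stmt6 (s : ℕ → ℂ) (hs0 : s 0 = 1)
    (h3 : ∀ m : ℕ, 3 ≤ m → chiOnes s m = 0) (h2 : chiOnes s 2 ≠ 0)
    (ℓ : ℕ) (lam : Fin ℓ → ℕ) (hpos : ∀ i, 0 < lam i)
    (hlt : (∑ i, lam i) + 2 < 2 * ℓ) :
    chiFam (Finset.univ : Finset (Fin ℓ)) lam s = 0 := by
  refine lemV hs0 h3 (∑ i, lam i) Finset.univ lam rfl ?_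
  rwa [Finset.card_univ, Fintype.card_fin]
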